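/- Let f : [a,b] → (0,∞) be continuous, let g : [a,b] → [0,∞) be a non-vanishing function of bounded variation with g(a) = 0, and set x_L := inf{ x ∈ [a,b] : g(x) > 0 }. If there exists ε > 0 such that f is of bounded variation on [x_L, min(x_L + ε, b)], then ∫_a^y f(x) dg(x) > 0 for some y ∈ (a,b]. -/

import Mathlib

open Set Filter MeasureTheory

/-- The Riemann–Stieltjes sum of `f` with respect to `g` for the tagged partition with
points `t 0, …, t m` and tags `ξ 0, …, ξ (m-1)`. -/
noncomputable def RSSum (f g : ℝ → ℝ) (m : ℕ) (t ξ : ℕ → ℝ) : ℝ :=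
  ∑ i ∈ Finset.range m, f (ξ i) * (g (t (i + 1)) - g (t i))

/-- `t`, `ξ` form a tagged partition of `[a, b]` into `m` subintervals. -/
def IsTaggedPartition (a b : ℝ) (m : ℕ) (t ξ : ℕ → ℝ) : Prop :=
  0 < m ∧ t 0 = a ∧ t m = b ∧ (∀ i < m, t i < t (i + 1)) ∧
    ∀ i < m, ξ i ∈ Set.Icc (t i) (t (i + 1))

/-- `I` is the Riemann–Stieltjes integral `∫_a^b f dg`: the Riemann–Stieltjes sums tend to `I`
as the mesh of the tagged partition tends to zero. -/
def HasRSIntegral (f g : ℝ → ℝ) (a b : ℝ) (I : ℝ) : Prop :=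
  ∀ ε > 0, ∃ δ > 0, ∀ (m : ℕ) (t ξ : ℕ → ℝ), IsTaggedPartition a b m t ξ →
    (∀ i < m, t (i + 1) - t i < δ) → |RSSum f g m t ξ - I| < ε

open Classical in
/-- The Riemann–Stieltjes integral `∫_a^b f dg`, defaulting to `0` if it does not exist. -/
noncomputable def RSIntegral (f g : ℝ → ℝ) (a b : ℝ) : ℝ :=
  if h : ∃ I, HasRSIntegral f g a b I then h.choose else 0

/-!
Summation by parts on a partition tagged at right endpoints turns a Riemann–Stieltjes sum of `f`
against `g` on `[a, y]` into `f y * g y - ∑ g (tᵢ₊₁) * (f (tᵢ₊₂) - f (tᵢ₊₁))`. Since `g` vanishes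
to the left of `x_L`, only increments of `f` to the right of `x_L` occur, so the correction is at
most `sup |g| * Var(f, [x_L, y])`. Near `x_L` the variation of `f` is small (bounded variation and
right continuity), while points where `g` is positive accumulate at `x_L`; taking `y` there with
`g y` at least half of `sup g` makes every such sum, hence the integral, positive.

The integral exists because `g` is a difference of monotone functions, and for monotone `G` the
sums converge to the Lebesgue–Stieltjes integral against the right limit of `G`, corrected by the
jump `rightLim G a - G a` at the left endpoint.
-/

open scoped Topology ENNReal

namespace IsTaggedPartition

variable {a b : ℝ} {m : ℕ} {t ξ : ℕ → ℝ}

theorem strictMonoOn (hP : IsTaggedPartition a b m t ξ) : StrictMonoOn t (Iic m) :=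
  strictMonoOn_Iic_of_lt_succ fun i hi ↦ by simpa using hP.2.2.2.1 i hi

theorem mem_Icc (hP : IsTaggedPartition a b m t ξ) {i : ℕ} (hi : i ≤ m) : t i ∈ Icc a b := by
  have ht := hP.strictMonoOn.monotoneOn
  exact ⟨hP.2.1 ▸ ht (Nat.zero_le m) hi (Nat.zero_le i), hP.2.2.1 ▸ ht hi (le_refl m) hi⟩

theorem tag_mem_Icc (hP : IsTaggedPartition a b m t ξ) {i : ℕ} (hi : i < m) : ξ i ∈ Icc a b :=
  ⟨(hP.mem_Icc hi.le).1.trans (hP.2.2.2.2 i hi).1, (hP.2.2.2.2 i hi).2.trans (hP.mem_Icc hi).2⟩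

end IsTaggedPartition

theorem exists_isTaggedPartition_mesh_lt {a b δ : ℝ} (hab : a < b) (hδ : 0 < δ) :
    ∃ (m : ℕ) (t : ℕ → ℝ), IsTaggedPartition a b m t (fun i ↦ t (i + 1)) ∧
      ∀ i < m, t (i + 1) - t i < δ := by
  obtain ⟨m, hm⟩ := exists_nat_gt ((b - a) / δ)
  have hm₀ : (0 : ℝ) < m := (div_pos (sub_pos.2 hab) hδ).trans hm
  have hh : 0 < (b - a) / m := div_pos (sub_pos.2 hab) hm₀
  refine ⟨m, fun i ↦ a + i * ((b - a) / m), ⟨by exact_mod_cast hm₀, by simp, ?_, ?_, ?_⟩, ?_⟩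
  · field_simp; ring
  · intro i _; push_cast; linarith
  · intro i _; push_cast; constructor <;> linarith
  · intro i _
    push_cast
    rw [div_lt_iff₀ hδ] at hm
    rw [show a + (i + 1) * ((b - a) / m) - (a + i * ((b - a) / m)) = (b - a) / m by ring,
      div_lt_iff₀ hm₀]
    linarith

theorem rsSum_by_parts (f g : ℝ → ℝ) {m : ℕ} (hm : 0 < m) (t ξ : ℕ → ℝ) :
    RSSum f g m t ξ = f (ξ (m - 1)) * g (t m) - f (ξ 0) * g (t 0) -
      ∑ i ∈ Finset.range (m - 1), g (t (i + 1)) * (f (ξ (i + 1)) - f (ξ i)) := by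
  induction m with
  | zero => omega
  | succ n ih =>
    rcases Nat.eq_zero_or_pos n with rfl | hn
    · simp [RSSum]; ring
    · obtain ⟨k, rfl⟩ : ∃ k, n = k + 1 := ⟨n - 1, by omega⟩
      rw [RSSum, Finset.sum_range_succ, ← RSSum, ih hn]
      simp only [Nat.add_sub_cancel, Finset.sum_range_succ]
      ring

theorem rsSum_sub (f g₁ g₂ : ℝ → ℝ) (m : ℕ) (t ξ : ℕ → ℝ) :
    RSSum f (g₁ - g₂) m t ξ = RSSum f g₁ m t ξ - RSSum f g₂ m t ξ := by
  simp only [RSSum, ← Finset.sum_sub_distrib, Pi.sub_apply]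
  exact Finset.sum_congr rfl fun i _ ↦ by ring

theorem rsSum_congr {f g₁ g₂ : ℝ → ℝ} {a b : ℝ} {m : ℕ} {t ξ : ℕ → ℝ}
    (hP : IsTaggedPartition a b m t ξ) (hg : EqOn g₁ g₂ (Icc a b)) :
    RSSum f g₁ m t ξ = RSSum f g₂ m t ξ :=
  Finset.sum_congr rfl fun i hi ↦ by
    have hi : i < m := Finset.mem_range.1 hi
    rw [hg (hP.mem_Icc hi), hg (hP.mem_Icc hi.le)]

section HasRSIntegral

variable {f g g₁ g₂ : ℝ → ℝ} {a b I I₁ I₂ : ℝ}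

theorem HasRSIntegral.sub (h₁ : HasRSIntegral f g₁ a b I₁) (h₂ : HasRSIntegral f g₂ a b I₂) :
    HasRSIntegral f (g₁ - g₂) a b (I₁ - I₂) := by
  intro ε hε
  obtain ⟨δ₁, hδ₁, H₁⟩ := h₁ (ε / 2) (half_pos hε)
  obtain ⟨δ₂, hδ₂, H₂⟩ := h₂ (ε / 2) (half_pos hε)
  refine ⟨min δ₁ δ₂, lt_min hδ₁ hδ₂, fun m t ξ hP hmesh ↦ ?_⟩
  have e₁ := H₁ m t ξ hP fun i hi ↦ (hmesh i hi).trans_le (min_le_left _ _)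
  have e₂ := H₂ m t ξ hP fun i hi ↦ (hmesh i hi).trans_le (min_le_right _ _)
  rw [rsSum_sub]
  calc |RSSum f g₁ m t ξ - RSSum f g₂ m t ξ - (I₁ - I₂)|
      ≤ |RSSum f g₁ m t ξ - I₁| + |RSSum f g₂ m t ξ - I₂| := by
        rw [show RSSum f g₁ m t ξ - RSSum f g₂ m t ξ - (I₁ - I₂) =
          (RSSum f g₁ m t ξ - I₁) - (RSSum f g₂ m t ξ - I₂) by ring]
        exact abs_sub _ _
    _ < ε := by linarith

theorem HasRSIntegral.congr (h : HasRSIntegral f g₁ a b I) (hg : EqOn g₁ g₂ (Icc a b)) :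
    HasRSIntegral f g₂ a b I := fun ε hε ↦
  (h ε hε).imp fun _ ⟨hδ, H⟩ ↦ ⟨hδ, fun m t ξ hP hmesh ↦ rsSum_congr hP hg ▸ H m t ξ hP hmesh⟩

theorem hasRSIntegral_of_abs_rsSum_sub_le (C : ℝ)
    (h : ∀ ε > 0, ∃ δ > 0, ∀ (m : ℕ) (t ξ : ℕ → ℝ), IsTaggedPartition a b m t ξ →
      (∀ i < m, t (i + 1) - t i < δ) → |RSSum f g m t ξ - I| ≤ C * ε) :
    HasRSIntegral f g a b I := by
  intro ε hε
  have hC : 0 < |C| + 1 := by positivity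
  refine (h (ε / (|C| + 1)) (div_pos hε hC)).imp fun δ ⟨hδ, H⟩ ↦ ⟨hδ, fun m t ξ hP hmesh ↦ ?_⟩
  calc |RSSum f g m t ξ - I| ≤ C * (ε / (|C| + 1)) := H m t ξ hP hmesh
    _ ≤ |C| * (ε / (|C| + 1)) := by gcongr; exact le_abs_self C
    _ < ε := by rw [mul_div_assoc', div_lt_iff₀ hC]; nlinarith

theorem le_rsIntegral_of_forall_le_rsSum {β : ℝ} (hab : a < b) (hex : ∃ I, HasRSIntegral f g a b I)
    (h : ∀ (m : ℕ) (t : ℕ → ℝ), IsTaggedPartition a b m t (fun i ↦ t (i + 1)) →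
      β ≤ RSSum f g m t (fun i ↦ t (i + 1))) :
    β ≤ RSIntegral f g a b := by
  rw [RSIntegral, dif_pos hex]
  refine le_of_forall_pos_lt_add fun ε hε ↦ ?_
  obtain ⟨δ, hδ, H⟩ := hex.choose_spec ε hε
  obtain ⟨m, t, hP, hmesh⟩ := exists_isTaggedPartition_mesh_lt hab hδ
  linarith [h m t hP, (abs_lt.1 (H m t _ hP hmesh)).2]

end HasRSIntegral

section MonotoneIntegrator

open Function

theorem StieltjesFunction.abs_mul_sub_integral_le (σ : StieltjesFunction ℝ) {f : ℝ → ℝ}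
    {u v c ε : ℝ} (huv : u ≤ v) (hf : IntervalIntegrable f σ.measure u v)
    (h : ∀ x ∈ Icc u v, |c - f x| ≤ ε) :
    |c * (σ v - σ u) - ∫ x in u..v, f x ∂σ.measure| ≤ ε * (σ v - σ u) := by
  have hconst (d : ℝ) : ∫ _ in u..v, d ∂σ.measure = d * (σ v - σ u) := by
    rw [intervalIntegral.integral_const', Ioc_eq_empty (not_lt.2 huv), measureReal_empty,
      measureReal_def, σ.measure_Ioc, ENNReal.toReal_ofReal (sub_nonneg.2 (σ.mono huv)),
      smul_eq_mul]
    ring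
  rw [← hconst, ← hconst,
    ← intervalIntegral.integral_sub (intervalIntegrable_const (μ := σ.measure)) hf]
  refine intervalIntegral.norm_integral_le_of_norm_le (f := fun x ↦ c - f x) huv
    (ae_of_all _ fun x hx ↦ ?_) intervalIntegrable_const
  exact h x (Ioc_subset_Icc_self hx)

theorem StieltjesFunction.abs_rsSum_sub_integral_le (σ : StieltjesFunction ℝ) {f : ℝ → ℝ}
    {a b ε : ℝ} {m : ℕ} {t ξ : ℕ → ℝ} (hf : ContinuousOn f (Icc a b))
    (hP : IsTaggedPartition a b m t ξ)
    (hosc : ∀ i < m, ∀ x ∈ Icc (t i) (t (i + 1)), |f (ξ i) - f x| ≤ ε) :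
    |RSSum f σ m t ξ - ∫ x in a..b, f x ∂σ.measure| ≤ ε * (σ b - σ a) := by
  have hint : ∀ i < m, IntervalIntegrable f σ.measure (t i) (t (i + 1)) := fun i hi ↦
    (hf.mono (Icc_subset_Icc (hP.mem_Icc hi.le).1 (hP.mem_Icc hi).2)).intervalIntegrable_of_Icc
      (hP.2.2.2.1 i hi).le
  rw [← hP.2.1, ← hP.2.2.1, ← intervalIntegral.sum_integral_adjacent_intervals hint, RSSum,
    ← Finset.sum_sub_distrib]
  calc _ ≤ ∑ i ∈ Finset.range m,
        |f (ξ i) * (σ (t (i + 1)) - σ (t i)) - ∫ x in t i..t (i + 1), f x ∂σ.measure| :=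
        Finset.abs_sum_le_sum_abs _ _
    _ ≤ ∑ i ∈ Finset.range m, ε * (σ (t (i + 1)) - σ (t i)) :=
        Finset.sum_le_sum fun i hi ↦ by
          have hi := Finset.mem_range.1 hi
          exact σ.abs_mul_sub_integral_le (hP.2.2.2.1 i hi).le (hint i hi) (hosc i hi)
    _ = ε * (σ (t m) - σ (t 0)) := by rw [← Finset.mul_sum, Finset.sum_range_sub (fun i ↦ σ (t i))]

theorem Monotone.sum_rightLim_sub_le {G : ℝ → ℝ} (hG : Monotone G) {m : ℕ} {t : ℕ → ℝ}
    (ht : ∀ i < m, t i < t (i + 1)) :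
    ∑ i ∈ Finset.range m, (rightLim G (t i) - G (t i)) ≤ G (t m) - G (t 0) :=
  calc _ ≤ ∑ i ∈ Finset.range m, (G (t (i + 1)) - G (t i)) :=
        Finset.sum_le_sum fun i hi ↦ by
          gcongr
          exact hG.rightLim_le (ht i (Finset.mem_range.1 hi))
    _ = G (t m) - G (t 0) := Finset.sum_range_sub (fun i ↦ G (t i)) m

-- Summation by parts charges each jump `rightLim G tᵢ - G tᵢ` with one increment of `f` between
-- neighbouring tags, and the jumps at the points of a partition add up to at most `G b - G a`.
theorem Monotone.abs_rsSum_rightLim_sub_add_le {G f : ℝ → ℝ} (hG : Monotone G)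
    {a b ε : ℝ} {m : ℕ} {t ξ : ℕ → ℝ} (hP : IsTaggedPartition a b m t ξ)
    (hGb : rightLim G b = G b) (h₀ : |f a - f (ξ 0)| ≤ ε)
    (h₁ : ∀ i, i + 1 < m → |f (ξ (i + 1)) - f (ξ i)| ≤ ε) :
    |RSSum f (fun x ↦ rightLim G x - G x) m t ξ + f a * (rightLim G a - G a)|
      ≤ ε * (G b - G a) := by
  set J : ℝ → ℝ := fun x ↦ rightLim G x - G x
  have hJ (x : ℝ) : 0 ≤ J x := sub_nonneg.2 (hG.le_rightLim le_rfl)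
  obtain ⟨k, rfl⟩ : ∃ k, m = k + 1 := ⟨m - 1, by have := hP.1; omega⟩
  rw [rsSum_by_parts _ _ hP.1, Nat.add_sub_cancel, hP.2.2.1, hP.2.1]
  have hJb : J b = 0 := sub_eq_zero.2 hGb
  calc _ = |(f a - f (ξ 0)) * J a -
        ∑ i ∈ Finset.range k, J (t (i + 1)) * (f (ξ (i + 1)) - f (ξ i))| := by
        rw [hJb, show rightLim G a - G a = J a from rfl]
        congr 1; ring
    _ ≤ |(f a - f (ξ 0)) * J a| +
        ∑ i ∈ Finset.range k, |J (t (i + 1)) * (f (ξ (i + 1)) - f (ξ i))| :=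
        (abs_sub _ _).trans (add_le_add le_rfl (Finset.abs_sum_le_sum_abs _ _))
    _ ≤ ε * J a + ∑ i ∈ Finset.range k, ε * J (t (i + 1)) := by
        gcongr with i hi
        · rw [abs_mul, abs_of_nonneg (hJ a)]
          exact mul_le_mul_of_nonneg_right h₀ (hJ a)
        · rw [abs_mul, abs_of_nonneg (hJ _), mul_comm ε]
          exact mul_le_mul_of_nonneg_left (h₁ i (by simpa using hi)) (hJ _)
    _ = ε * ∑ i ∈ Finset.range (k + 1), J (t i) := by
        rw [Finset.sum_range_succ', hP.2.1, mul_add, Finset.mul_sum]; ring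
    _ ≤ ε * (G b - G a) := by
        have hε : 0 ≤ ε := (abs_nonneg _).trans h₀
        gcongr
        have := hG.sum_rightLim_sub_le hP.2.2.2.1
        rwa [hP.2.2.1, hP.2.1] at this

theorem Monotone.hasRSIntegral {G f : ℝ → ℝ} (hG : Monotone G) {a b : ℝ}
    (hf : ContinuousOn f (Icc a b)) (hGb : ContinuousWithinAt G (Ioi b) b) :
    HasRSIntegral f G a b
      ((∫ x in a..b, f x ∂hG.stieltjesFunction.measure) + f a * (rightLim G a - G a)) := by
  set σ := hG.stieltjesFunction
  have hσ : ∀ x, σ x = rightLim G x := hG.stieltjesFunction_eq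
  have hσb : rightLim G b = G b := rightLim_eq_of_tendsto hGb
  have hsplit (m : ℕ) (t ξ : ℕ → ℝ) :
      RSSum f G m t ξ = RSSum f σ m t ξ - RSSum f (fun x ↦ rightLim G x - G x) m t ξ := by
    rw [← rsSum_sub]
    congr 1
    ext x
    simp [hσ]
  refine hasRSIntegral_of_abs_rsSum_sub_le (2 * (G b - G a)) fun ε hε ↦ ?_
  obtain ⟨δ, hδ, hfδ⟩ := Metric.uniformContinuousOn_iff.1
    (isCompact_Icc.uniformContinuousOn_of_continuous hf) ε hε
  have hclose : ∀ u ∈ Icc a b, ∀ v ∈ Icc a b, |u - v| < δ → |f u - f v| ≤ ε :=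
    fun u hu v hv huv ↦ (hfδ u hu v hv huv).le
  refine ⟨δ / 2, half_pos hδ, fun m t ξ hP hmesh ↦ ?_⟩
  have hl (i : ℕ) (hi : i < m) : t i ≤ ξ i := (hP.2.2.2.2 i hi).1
  have hr (i : ℕ) (hi : i < m) : ξ i ≤ t (i + 1) := (hP.2.2.2.2 i hi).2
  have hσ_est := σ.abs_rsSum_sub_integral_le hf hP fun i hi x hx ↦
    hclose _ (hP.tag_mem_Icc hi) _ ⟨(hP.mem_Icc hi.le).1.trans hx.1, hx.2.trans (hP.mem_Icc hi).2⟩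
      (abs_lt.2 ⟨by linarith [hl i hi, hx.2, hmesh i hi], by linarith [hr i hi, hx.1, hmesh i hi]⟩)
  have hJ_est := hG.abs_rsSum_rightLim_sub_add_le hP hσb (f := f) (ε := ε)
    (hclose _ (hP.2.1 ▸ hP.mem_Icc (Nat.zero_le m)) _ (hP.tag_mem_Icc hP.1)
      (abs_lt.2 ⟨by linarith [hr 0 hP.1, hmesh 0 hP.1, hP.2.1], by linarith [hl 0 hP.1, hP.2.1]⟩))
    fun i hi ↦ hclose _ (hP.tag_mem_Icc hi) _ (hP.tag_mem_Icc (by omega))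
      (abs_lt.2 ⟨by linarith [hr i (by omega), hl (i + 1) hi],
        by linarith [hl i (by omega), hr (i + 1) hi, hmesh i (by omega), hmesh (i + 1) hi]⟩)
  have hGa : G a ≤ σ a := hσ a ▸ hG.le_rightLim le_rfl
  rw [hσ b, hσb] at hσ_est
  rw [hsplit, ← hσ a]
  calc _ = |(RSSum f σ m t ξ - ∫ x in a..b, f x ∂σ.measure) -
        (RSSum f (fun x ↦ rightLim G x - G x) m t ξ + f a * (rightLim G a - G a))| := by
        rw [hσ a]; congr 1; ring
    _ ≤ ε * (G b - σ a) + ε * (G b - G a) := (abs_sub _ _).trans (add_le_add hσ_est hJ_est)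
    _ ≤ 2 * (G b - G a) * ε := by nlinarith

theorem MonotoneOn.exists_hasRSIntegral {f g : ℝ → ℝ} {a b : ℝ} (hab : a ≤ b)
    (hg : MonotoneOn g (Icc a b)) (hf : ContinuousOn f (Icc a b)) :
    ∃ I, HasRSIntegral f g a b I := by
  set G := IccExtend hab fun x : Icc a b ↦ g x
  have hG : Monotone G := (monotoneOn_iff_monotone.1 hg).IccExtend hab
  have hGb : ContinuousWithinAt G (Ioi b) b :=
    continuousWithinAt_const.congr (fun x hx ↦ IccExtend_of_right_le hab _ (le_of_lt hx))
      (IccExtend_of_right_le hab _ le_rfl)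
  exact ⟨_, (hG.hasRSIntegral hf hGb).congr fun x hx ↦ IccExtend_of_mem hab _ hx⟩

theorem BoundedVariationOn.exists_hasRSIntegral {f g : ℝ → ℝ} {a b : ℝ} (hab : a ≤ b)
    (hg : BoundedVariationOn g (Icc a b)) (hf : ContinuousOn f (Icc a b)) :
    ∃ I, HasRSIntegral f g a b I := by
  obtain ⟨p, q, hp, hq, rfl⟩ := hg.locallyBoundedVariationOn.exists_monotoneOn_sub_monotoneOn
  obtain ⟨I₁, h₁⟩ := hp.exists_hasRSIntegral hab hf
  obtain ⟨I₂, h₂⟩ := hq.exists_hasRSIntegral hab hf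
  exact ⟨I₁ - I₂, h₁.sub h₂⟩

end MonotoneIntegrator

theorem BoundedVariationOn.sum_abs_sub_le {f : ℝ → ℝ} {s : Set ℝ} (hf : BoundedVariationOn f s)
    {n : ℕ} {u : ℕ → ℝ} (hu : MonotoneOn u (Iic n)) (us : ∀ i ≤ n, u i ∈ s) :
    ∑ i ∈ Finset.range n, |f (u (i + 1)) - f (u i)| ≤ (eVariationOn f s).toReal := by
  simp_rw [← Real.dist_eq, dist_edist]
  rw [← ENNReal.toReal_sum fun _ _ ↦ edist_ne_top _ _]
  exact ENNReal.toReal_mono hf (eVariationOn.sum_le_of_monotoneOn_Iic hu us)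

theorem sub_mul_eVariationOn_le_rsSum {f g : ℝ → ℝ} {a b x M : ℝ} {m : ℕ} {t : ℕ → ℝ}
    (hP : IsTaggedPartition a b m t (fun i ↦ t (i + 1))) (hx : x ∈ Icc a b) (hga : g a = 0)
    (hg₀ : ∀ u ∈ Ico a x, g u = 0) (hgM : ∀ u ∈ Icc a b, |g u| ≤ M)
    (hf : BoundedVariationOn f (Icc x b)) :
    f b * g b - M * (eVariationOn f (Icc x b)).toReal ≤ RSSum f g m t (fun i ↦ t (i + 1)) := by
  have hm : m - 1 + 1 = m := by have := hP.1; omega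
  set F : ℝ → ℝ := fun u ↦ f (max x u)
  have hF : eVariationOn F (Icc a b) ≤ eVariationOn f (Icc x b) :=
    eVariationOn.comp_le_of_monotoneOn f (max x) (fun _ _ _ _ h ↦ max_le_max_left x h)
      fun u hu ↦ ⟨le_max_left x u, max_le hx.2 hu.2⟩
  have hFbv : BoundedVariationOn F (Icc a b) := ne_top_of_le_ne_top hf hF
  have hM : 0 ≤ M := (abs_nonneg _).trans (hgM a ⟨le_rfl, hx.1.trans hx.2⟩)
  -- `g` vanishes left of `x`, so only increments of `f` at points `≥ x`, i.e. of `F`, contribute.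
  have hterm : ∀ i < m - 1, g (t (i + 1)) * (f (t (i + 1 + 1)) - f (t (i + 1))) =
      g (t (i + 1)) * (F (t (i + 1 + 1)) - F (t (i + 1))) := by
    intro i hi
    rcases lt_or_ge (t (i + 1)) x with hlt | hge
    · rw [hg₀ _ ⟨(hP.mem_Icc (by omega)).1, hlt⟩, zero_mul, zero_mul]
    · have hge' : x ≤ t (i + 1 + 1) := hge.trans (hP.2.2.2.1 (i + 1) (by omega)).le
      simp only [F, max_eq_right hge, max_eq_right hge']
  have hsum : |∑ i ∈ Finset.range (m - 1), g (t (i + 1)) * (f (t (i + 1 + 1)) - f (t (i + 1)))|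
      ≤ M * (eVariationOn f (Icc x b)).toReal :=
    calc _ ≤ ∑ i ∈ Finset.range (m - 1), M * |F (t (i + 1 + 1)) - F (t (i + 1))| := by
          refine (Finset.abs_sum_le_sum_abs _ _).trans (Finset.sum_le_sum fun i hi ↦ ?_)
          rw [hterm i (Finset.mem_range.1 hi), abs_mul]
          exact mul_le_mul_of_nonneg_right (hgM _ (hP.mem_Icc (by simp at hi; omega)))
            (abs_nonneg _)
      _ ≤ M * (eVariationOn F (Icc a b)).toReal := by
          rw [← Finset.mul_sum]
          refine mul_le_mul_of_nonneg_left (hFbv.sum_abs_sub_le (u := fun i ↦ t (i + 1)) ?_ ?_) hM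
          · intro i hi j hj hij
            simp only [mem_Iic] at hi hj
            exact hP.strictMonoOn.monotoneOn (show i + 1 ≤ m by omega) (show j + 1 ≤ m by omega)
              (by omega)
          · exact fun i hi ↦ hP.mem_Icc (by omega)
      _ ≤ M * (eVariationOn f (Icc x b)).toReal := by gcongr
  rw [rsSum_by_parts _ _ hP.1, hm, hP.2.2.1, hP.2.1, hga, mul_zero, sub_zero]
  linarith [le_abs_self (∑ i ∈ Finset.range (m - 1),
    g (t (i + 1)) * (f (t (i + 1 + 1)) - f (t (i + 1))))]

theorem exists_rsIntegral_pos {f g : ℝ → ℝ} {a x z : ℝ} (hax : a ≤ x) (hxz : x ≤ z)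
    (hf : ContinuousOn f (Icc a z)) (hg : BoundedVariationOn g (Icc a z))
    (hg_nonneg : ∀ u ∈ Icc a z, 0 ≤ g u) (hga : g a = 0) (hg₀ : ∀ u ∈ Ico a x, g u = 0)
    (hgz : 0 < g z) (hfv : BoundedVariationOn f (Icc x z))
    (hfvar : (eVariationOn f (Icc x z)).toReal < f x / 4) :
    ∃ y ∈ Ioc a z, 0 < RSIntegral f g a y := by
  have hbdd : BddAbove (g '' Icc x z) := ⟨g z + (eVariationOn g (Icc a z)).toReal, by
    rintro _ ⟨u, hu, rfl⟩
    linarith [hg.sub_le ⟨hax.trans hu.1, hu.2⟩ ⟨hax.trans hxz, le_rfl⟩]⟩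
  set M := sSup (g '' Icc x z)
  have hgM (u : ℝ) (hu : u ∈ Icc x z) : g u ≤ M := le_csSup hbdd (mem_image_of_mem g hu)
  have hM : 0 < M := hgz.trans_le (hgM z ⟨hxz, le_rfl⟩)
  -- `y` nearly maximises `g` on `[x, z]`, so that `g y` dominates `|g|` on `[a, y]`.
  obtain ⟨_, ⟨y, hy, rfl⟩, hgy⟩ :=
    exists_lt_of_lt_csSup ((nonempty_Icc.2 hxz).image g) (half_lt_self hM)
  have hay : a < y := (hax.trans hy.1).lt_of_ne (by rintro rfl; linarith)
  have hyz : Icc a y ⊆ Icc a z := Icc_subset_Icc le_rfl hy.2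
  have hfvy : BoundedVariationOn f (Icc x y) := hfv.mono (Icc_subset_Icc le_rfl hy.2)
  have hVy : (eVariationOn f (Icc x y)).toReal ≤ (eVariationOn f (Icc x z)).toReal :=
    ENNReal.toReal_mono hfv (eVariationOn.mono f (Icc_subset_Icc le_rfl hy.2))
  have hfy : f x - f y ≤ (eVariationOn f (Icc x y)).toReal :=
    hfvy.sub_le ⟨le_rfl, hy.1⟩ ⟨hy.1, le_rfl⟩
  have hgM' (u : ℝ) (hu : u ∈ Icc a y) : |g u| ≤ M := by
    rcases lt_or_ge u x with hux | hux
    · rw [hg₀ u ⟨hu.1, hux⟩, abs_zero]; exact hM.le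
    · rw [abs_of_nonneg (hg_nonneg u (hyz hu))]; exact hgM u ⟨hux, hu.2.trans hy.2⟩
  refine ⟨y, ⟨hay, hy.2⟩, lt_of_lt_of_le ?_ (le_rsIntegral_of_forall_le_rsSum hay
    ((hg.mono hyz).exists_hasRSIntegral hay.le (hf.mono hyz))
    fun m t hP ↦ sub_mul_eVariationOn_le_rsSum hP ⟨hax, hy.1⟩ hga hg₀ hgM' hfvy)⟩
  have hV := (ENNReal.toReal_nonneg : 0 ≤ (eVariationOn f (Icc x y)).toReal)
  nlinarith [mul_lt_mul_of_pos_left hgy (show 0 < f y by linarith)]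

theorem IsGLB.frequently_nhdsWithin_Icc_mem {S : Set ℝ} {x b ε : ℝ} (hS : IsGLB S x)
    (hne : S.Nonempty) (hSb : S ⊆ Iic b) (hε : 0 < ε) :
    ∃ᶠ z in 𝓝[Icc x (min (x + ε) b)] x, z ∈ S := by
  refine frequently_nhdsWithin_iff.2 (((hS.frequently_mem hne).and_eventually
    (eventually_nhdsWithin_of_eventually_nhds (eventually_lt_nhds (lt_add_of_pos_right x hε))))
      |>.filter_mono nhdsWithin_le_nhds |>.mono fun z ⟨hzS, hzε⟩ ↦ ⟨hzS, ?_⟩)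
  exact ⟨hS.1 hzS, le_min hzε.le (hSb hzS)⟩

theorem BoundedVariationOn.exists_mem_eVariationOn_Icc_lt {f : ℝ → ℝ} {s S : Set ℝ} {x : ℝ}
    {ε : ℝ≥0∞} (hf : BoundedVariationOn f s) (hcont : ContinuousWithinAt f (s ∩ Ici x) x)
    (hS : ∃ᶠ z in 𝓝[s] x, z ∈ S) (hε : 0 < ε) :
    ∃ z ∈ S, z ∈ s ∧ eVariationOn f (s ∩ Icc x z) < ε := by
  obtain ⟨z, ⟨hzvar, hzs⟩, hzS⟩ := ((hf.tendsto_eVariationOn_Icc_zero_right x hcont).eventually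
    (gt_mem_nhds hε)).and self_mem_nhdsWithin |>.and_frequently hS |>.exists
  exact ⟨z, hzS, hzs, hzvar⟩

theorem stmt_14_general (a b : ℝ) (f g : ℝ → ℝ)
    (hf_cont : ContinuousOn f (Set.Icc a b))
    (hf_pos : ∀ x ∈ Set.Icc a b, 0 < f x)
    (hg_nonneg : ∀ x ∈ Set.Icc a b, 0 ≤ g x)
    (hg_bv : BoundedVariationOn g (Set.Icc a b))
    (hg_ne : ∃ x ∈ Set.Icc a b, g x ≠ 0)
    (hga : g a = 0)
    (xL : ℝ) (hxL : xL = sInf {x | x ∈ Set.Icc a b ∧ 0 < g x})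
    (hf_bv : ∃ ε : ℝ, 0 < ε ∧ BoundedVariationOn f (Set.Icc xL (min (xL + ε) b))) :
    ∃ y ∈ Set.Ioc a b, 0 < RSIntegral f g a y := by
  set S := {x | x ∈ Icc a b ∧ 0 < g x}
  obtain ⟨x₀, hx₀, hgx₀⟩ := hg_ne
  have hx₀S : x₀ ∈ S := ⟨hx₀, (hg_nonneg x₀ hx₀).lt_of_ne' hgx₀⟩
  have hS : IsGLB S xL := hxL ▸ isGLB_csInf ⟨x₀, hx₀S⟩ ⟨a, fun x hx ↦ hx.1.1⟩
  have hxL_mem : xL ∈ Icc a b := ⟨hS.2 fun x hx ↦ hx.1.1, (hS.1 hx₀S).trans hx₀.2⟩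
  have hg₀ (u : ℝ) (hu : u ∈ Ico a xL) : g u = 0 :=
    (hg_nonneg u ⟨hu.1, hu.2.le.trans hxL_mem.2⟩).antisymm'
      (not_lt.1 fun h ↦ (hS.1 ⟨⟨hu.1, hu.2.le.trans hxL_mem.2⟩, h⟩).not_gt hu.2)
  obtain ⟨ε, hε, hfbv⟩ := hf_bv
  set s := Icc xL (min (xL + ε) b)
  have hs : s ⊆ Icc a b := Icc_subset_Icc hxL_mem.1 (min_le_right _ _)
  obtain ⟨z, hzS, hzs, hzvar⟩ := hfbv.exists_mem_eVariationOn_Icc_lt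
    ((hf_cont xL hxL_mem).mono (inter_subset_left.trans hs))
    (hS.frequently_nhdsWithin_Icc_mem ⟨x₀, hx₀S⟩ (fun z hz ↦ hz.1.2) hε)
    (ENNReal.ofReal_pos.2 (div_pos (hf_pos xL hxL_mem) four_pos))
  have hzs' : Icc xL z ⊆ s := Icc_subset_Icc le_rfl hzs.2
  rw [inter_eq_right.2 hzs'] at hzvar
  have hz : Icc a z ⊆ Icc a b := Icc_subset_Icc le_rfl hzS.1.2
  obtain ⟨y, hy, hpos⟩ := exists_rsIntegral_pos hxL_mem.1 hzs.1 (hf_cont.mono hz) (hg_bv.mono hz)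
    (fun u hu ↦ hg_nonneg u (hz hu)) hga hg₀ hzS.2 (hfbv.mono hzs')
    (ENNReal.toReal_lt_of_lt_ofReal hzvar)
  exact ⟨y, ⟨hy.1, hy.2.trans hzS.1.2⟩, hpos⟩

/-- refinement of Theorem 3: it suffices that `f` is of bounded variation on
`[x_L, min (x_L + ε) b]` for some `ε > 0`, where `x_L = inf { x ∈ [a,b] : g x > 0 }`. -/
theorem stmt_14 (a b : ℝ) (hab : a ≤ b) (f g : ℝ → ℝ)
    (hf_cont : ContinuousOn f (Set.Icc a b))
    (hf_pos : ∀ x ∈ Set.Icc a b, 0 < f x)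
    (hg_nonneg : ∀ x ∈ Set.Icc a b, 0 ≤ g x)
    (hg_bv : BoundedVariationOn g (Set.Icc a b))
    (hg_ne : ∃ x ∈ Set.Icc a b, g x ≠ 0)
    (hga : g a = 0)
    (xL : ℝ) (hxL : xL = sInf {x | x ∈ Set.Icc a b ∧ 0 < g x})
    (hf_bv : ∃ ε : ℝ, 0 < ε ∧ BoundedVariationOn f (Set.Icc xL (min (xL + ε) b))) :
    ∃ y ∈ Set.Ioc a b, 0 < RSIntegral f g a y :=
  stmt_14_general a b f g hf_cont hf_pos hg_nonneg hg_bv hg_ne hga xL hxL hf_bv
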